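/- Assume |μ_1| ≥ |μ_2| ≥ … ≥ |μ_p|. Then prox_{ρ g*}(μ) = sgn(μ) ⊙ ν*, where ν* is the unique minimizer of (1/2)∑_j (ν_j − |μ_j|)² + ρ∑_{j=1}^k H_M(ν_j) subject to ν_1 ≥ ν_2 ≥ … ≥ ν_p, and where g*(α) = TopSum_k(H_M(α)). -/

import Mathlib

/-- The Huber function with threshold `M`. -/
noncomputable def huber (M α : ℝ) : ℝ :=
  if |α| ≤ M then α ^ 2 / 2 else M * |α| - M ^ 2 / 2

/-- Sum of the `k` largest components of `c`. -/
noncomputable def topSum {p : ℕ} (k : ℕ) (c : Fin p → ℝ) : ℝ :=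
  sSup {x : ℝ | ∃ s : Finset (Fin p), s.card = k ∧ x = ∑ j ∈ s, c j}

section Aux

lemma huber_abs_eq (M x : ℝ) : huber M x = huber M |x| := by
  unfold huber; rw [abs_abs, sq_abs]

lemma huber_nonneg {M : ℝ} (hM : 0 ≤ M) (x : ℝ) : 0 ≤ huber M x := by
  unfold huber; split_ifs with h
  · positivity
  · push_neg at h
    nlinarith [abs_nonneg x]

lemma huber_mono {M : ℝ} (hM : 0 ≤ M) {a b : ℝ} (ha : 0 ≤ a) (hab : a ≤ b) :
    huber M a ≤ huber M b := by
  unfold huber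
  rw [abs_of_nonneg ha, abs_of_nonneg (ha.trans hab)]
  split_ifs with h1 h2 h2 <;> nlinarith

lemma huber_affine_le {M u : ℝ} (hu : |u| ≤ M) (x : ℝ) :
    u * x - u ^ 2 / 2 ≤ huber M x := by
  unfold huber; split_ifs with h
  · nlinarith [sq_nonneg (u - x)]
  · push_neg at h
    have h1 : u * x ≤ |u| * |x| := by
      calc u * x ≤ |u * x| := le_abs_self _
        _ = |u| * |x| := abs_mul u x
    nlinarith [sq_abs u, abs_nonneg u, abs_nonneg x,
      mul_nonneg (sub_nonneg.2 hu) (sub_nonneg.2 h.le), sq_nonneg (M - |u|)]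

lemma linear_le_huber (M x : ℝ) : M * |x| - M ^ 2 / 2 ≤ huber M x := by
  unfold huber; split_ifs with h
  · nlinarith [sq_abs x, sq_nonneg (|x| - M)]
  · exact le_rfl

lemma huber_midpoint {M : ℝ} (hM : 0 ≤ M) (x y : ℝ) :
    huber M ((x + y) / 2) ≤ (huber M x + huber M y) / 2 := by
  by_cases h : |(x + y) / 2| ≤ M
  · set u := (x + y) / 2 with hu
    have hx := huber_affine_le (M := M) (u := u) h x
    have hy := huber_affine_le (M := M) (u := u) h y
    have he : huber M u = u ^ 2 / 2 := by unfold huber; rw [if_pos h]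
    have h3 : u * x + u * y = 2 * u ^ 2 := by rw [hu]; ring
    rw [he]; linarith
  · push_neg at h
    have h1 := linear_le_huber M x
    have h2 := linear_le_huber M y
    have he : huber M ((x + y) / 2) = M * |(x + y) / 2| - M ^ 2 / 2 := by
      unfold huber; rw [if_neg (not_le.2 h)]
    have habs : |(x + y) / 2| ≤ (|x| + |y|) / 2 := by
      rw [abs_div, abs_two]
      linarith [abs_add_le x y]
    rw [he]
    nlinarith [mul_le_mul_of_nonneg_left habs hM]

variable {p k : ℕ}

lemma topSum_set_finite (k : ℕ) (c : Fin p → ℝ) :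
    {x : ℝ | ∃ s : Finset (Fin p), s.card = k ∧ x = ∑ j ∈ s, c j}.Finite := by
  have hsub : {x : ℝ | ∃ s : Finset (Fin p), s.card = k ∧ x = ∑ j ∈ s, c j} ⊆
      (fun s : Finset (Fin p) => ∑ j ∈ s, c j) '' Set.univ := by
    rintro x ⟨s, _, rfl⟩; exact ⟨s, trivial, rfl⟩
  exact (Set.finite_univ.image _).subset hsub

lemma le_topSum {c : Fin p → ℝ} {s : Finset (Fin p)} (hs : s.card = k) :
    ∑ j ∈ s, c j ≤ topSum k c :=
  le_csSup (topSum_set_finite k c).bddAbove ⟨s, hs, rfl⟩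

lemma topSum_le (hkp : k ≤ p) {c : Fin p → ℝ} {b : ℝ}
    (h : ∀ s : Finset (Fin p), s.card = k → ∑ j ∈ s, c j ≤ b) : topSum k c ≤ b := by
  obtain ⟨s, -, hs⟩ := Finset.exists_subset_card_eq (s := (Finset.univ : Finset (Fin p))) (n := k)
    (by simpa using hkp)
  exact csSup_le ⟨_, s, hs, rfl⟩ (by rintro x ⟨t, ht, rfl⟩; exact h t ht)

lemma topSum_mono (hkp : k ≤ p) {c d : Fin p → ℝ} (h : ∀ j, c j ≤ d j) :
    topSum k c ≤ topSum k d :=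
  topSum_le hkp fun s hs => (Finset.sum_le_sum fun j _ => h j).trans (le_topSum hs)

lemma topSum_half_le (hkp : k ≤ p) (c d : Fin p → ℝ) :
    topSum k (fun j => (c j + d j) / 2) ≤ (topSum k c + topSum k d) / 2 := by
  refine topSum_le hkp fun s hs => ?_
  have h1 : ∑ j ∈ s, c j ≤ topSum k c := le_topSum hs
  have h2 : ∑ j ∈ s, d j ≤ topSum k d := le_topSum hs
  have : ∑ j ∈ s, (c j + d j) / 2 = (∑ j ∈ s, c j + ∑ j ∈ s, d j) / 2 := by
    rw [← Finset.sum_add_distrib, Finset.sum_div]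
  rw [this]; linarith

lemma topSum_comp_perm (hkp : k ≤ p) (c : Fin p → ℝ) (π : Equiv.Perm (Fin p)) :
    topSum k (fun j => c (π j)) = topSum k c := by
  apply le_antisymm
  · refine topSum_le hkp fun s hs => ?_
    have he : ∑ j ∈ s, c (π j) = ∑ j ∈ s.image π, c j :=
      (Finset.sum_image (fun a _ b _ h => π.injective h)).symm
    rw [he]
    exact le_topSum (by rw [Finset.card_image_of_injective _ π.injective, hs])
  · refine topSum_le hkp fun s hs => ?_
    have he : ∑ j ∈ s.image π.symm, c (π j) = ∑ j ∈ s, c j := by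
      rw [Finset.sum_image (fun a _ b _ h => π.symm.injective h)]
      exact Finset.sum_congr rfl fun j _ => by rw [Equiv.apply_symm_apply]
    rw [← he]
    exact le_topSum (by rw [Finset.card_image_of_injective _ π.symm.injective, hs])

lemma filter_lt_eq_map (hkp : k ≤ p) :
    Finset.univ.filter (fun j : Fin p => (j : ℕ) < k) =
      Finset.univ.map (Fin.castLEEmb hkp) := by
  ext j
  simp only [Finset.mem_filter, Finset.mem_univ, true_and, Finset.mem_map]
  constructor
  · intro hj
    exact ⟨⟨(j : ℕ), hj⟩, by ext; simp [Fin.castLEEmb]⟩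
  · rintro ⟨i, rfl⟩
    simpa [Fin.castLEEmb] using i.2

lemma card_filter_lt (hkp : k ≤ p) :
    (Finset.univ.filter (fun j : Fin p => (j : ℕ) < k)).card = k := by
  rw [filter_lt_eq_map hkp, Finset.card_map]; simp

lemma strictMono_val_le {f : Fin k → Fin p} (hf : StrictMono f) (i : Fin k) :
    (i : ℕ) ≤ (f i : ℕ) := by
  obtain ⟨n, hn⟩ := i
  induction n with
  | zero => simp
  | succ n ih =>
      have hn' : n < k := Nat.lt_of_succ_lt hn
      have h1 : (f ⟨n, hn'⟩ : ℕ) < (f ⟨n + 1, hn⟩ : ℕ) := hf (by simp [Fin.lt_def])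
      have h2 := ih hn'
      simp only [] at h2 ⊢
      omega

lemma topSum_of_antitone (hkp : k ≤ p) {c : Fin p → ℝ}
    (hc : ∀ i j : Fin p, i ≤ j → c j ≤ c i) :
    topSum k c = ∑ j ∈ Finset.univ.filter (fun j : Fin p => (j : ℕ) < k), c j := by
  apply le_antisymm
  · refine topSum_le hkp fun s hs => ?_
    have hset : s = Finset.univ.map (s.orderEmbOfFin hs).toEmbedding := by
      ext x
      simp only [Finset.mem_map, Finset.mem_univ, true_and]
      rw [show (∃ i, (s.orderEmbOfFin hs).toEmbedding i = x) ↔ x ∈ Set.range (s.orderEmbOfFin hs)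
        from Iff.rfl]
      rw [Finset.range_orderEmbOfFin s hs]; simp
    rw [hset, Finset.sum_map, filter_lt_eq_map hkp, Finset.sum_map]
    refine Finset.sum_le_sum fun i _ => ?_
    apply hc
    rw [Fin.le_def]
    have := strictMono_val_le (s.orderEmbOfFin hs).strictMono i
    simpa using this
  · exact le_topSum (card_filter_lt hkp)

lemma sum_sq_sub (u m : Fin p → ℝ) :
    ∑ j, (u j - m j) ^ 2 = ∑ j, (u j) ^ 2 - 2 * ∑ j, m j * u j + ∑ j, (m j) ^ 2 := by
  rw [Finset.mul_sum, ← Finset.sum_sub_distrib, ← Finset.sum_add_distrib]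
  exact Finset.sum_congr rfl fun j _ => by ring

end Aux

/-- If `|μ₁| ≥ … ≥ |μ_p|`, then `prox_{ρ g*}(μ) = sgn(μ) ⊙ ν*`, where
`g*(α) = TopSum_k(H_M(α))` and `ν*` is the (unique) minimizer of
`(1/2)∑ⱼ (νⱼ − |μⱼ|)² + ρ∑_{j<k} H_M(νⱼ)` over the monotone chain
`ν₁ ≥ ν₂ ≥ … ≥ ν_p`. -/
theorem prox_eq_sign_mul_isotonic {p k : ℕ} (hk1 : 1 ≤ k) (hkp : k ≤ p)
    (M ρ : ℝ) (hM : 0 < M) (hρ : 0 < ρ)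
    (μ : Fin p → ℝ) (hsorted : ∀ i j : Fin p, i ≤ j → |μ j| ≤ |μ i|)
    (νstar : Fin p → ℝ)
    (hνchain : ∀ i j : Fin p, i ≤ j → νstar j ≤ νstar i)
    (hνmin : ∀ ν : Fin p → ℝ, (∀ i j : Fin p, i ≤ j → ν j ≤ ν i) →
      (1 / 2) * (∑ j, (νstar j - |μ j|) ^ 2)
          + ρ * ∑ j ∈ Finset.univ.filter (fun j : Fin p => (j : ℕ) < k), huber M (νstar j)
        ≤ (1 / 2) * (∑ j, (ν j - |μ j|) ^ 2)
          + ρ * ∑ j ∈ Finset.univ.filter (fun j : Fin p => (j : ℕ) < k), huber M (ν j))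
    (αstar : Fin p → ℝ)
    (hαmin : ∀ α : Fin p → ℝ,
      (1 / 2) * (∑ j, (αstar j - μ j) ^ 2) + ρ * topSum k (fun j => huber M (αstar j))
        ≤ (1 / 2) * (∑ j, (α j - μ j) ^ 2) + ρ * topSum k (fun j => huber M (α j))) :
    αstar = fun j => Real.sign (μ j) * νstar j := by
  classical
  -- Step 1: `νstar` is nonnegative.
  have hν0 : ∀ j, 0 ≤ νstar j := by
    by_contra hneg
    push_neg at hneg
    obtain ⟨j0, hj0⟩ := hneg
    set ν' : Fin p → ℝ := fun j => max (νstar j) 0 with hν'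
    have hchain' : ∀ i j : Fin p, i ≤ j → ν' j ≤ ν' i := fun i j hij =>
      max_le_max (hνchain i j hij) le_rfl
    have hmin := hνmin ν' hchain'
    have hquad : ∑ j, (ν' j - |μ j|) ^ 2 < ∑ j, (νstar j - |μ j|) ^ 2 := by
      refine Finset.sum_lt_sum (fun j _ => ?_) ⟨j0, Finset.mem_univ _, ?_⟩
      · rcases le_or_gt 0 (νstar j) with h | h
        · simp [hν', max_eq_left h]
        · have h0 : ν' j = 0 := max_eq_right h.le
          rw [h0]
          nlinarith [abs_nonneg (μ j)]
      · have h0 : ν' j0 = 0 := max_eq_right hj0.le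
        rw [h0]
        nlinarith [abs_nonneg (μ j0)]
    have hhub : ∑ j ∈ Finset.univ.filter (fun j : Fin p => (j : ℕ) < k), huber M (ν' j)
        ≤ ∑ j ∈ Finset.univ.filter (fun j : Fin p => (j : ℕ) < k), huber M (νstar j) := by
      refine Finset.sum_le_sum fun j _ => ?_
      rcases le_or_gt 0 (νstar j) with h | h
      · simp [hν', max_eq_left h]
      · have h0 : ν' j = 0 := max_eq_right h.le
        rw [h0]
        have hz : huber M 0 = 0 := by simp [huber, hM.le]
        rw [hz]
        exact huber_nonneg hM.le _
    have hmul := mul_le_mul_of_nonneg_left hhub hρ.le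
    linarith
  have hsign_abs : ∀ j, |Real.sign (μ j)| ≤ 1 := by
    intro j
    rcases lt_trichotomy (μ j) 0 with h | h | h
    · simp [Real.sign_of_neg h]
    · simp [h]
    · simp [Real.sign_of_pos h]
  set β : Fin p → ℝ := fun j => Real.sign (μ j) * νstar j with hβ
  -- Step 2: `β` is a global minimizer of the prox objective.
  have key : ∀ α : Fin p → ℝ,
      (1 / 2) * (∑ j, (β j - μ j) ^ 2) + ρ * topSum k (fun j => huber M (β j))
        ≤ (1 / 2) * (∑ j, (α j - μ j) ^ 2) + ρ * topSum k (fun j => huber M (α j)) := by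
    intro α
    set a : Fin p → ℝ := fun j => |α j| with ha
    set π : Equiv.Perm (Fin p) := Fin.revPerm.trans (Tuple.sort a) with hπ
    set ν : Fin p → ℝ := fun j => a (π j) with hν
    have hνanti : ∀ i j : Fin p, i ≤ j → ν j ≤ ν i := by
      intro i j hij
      have h1 : Fin.rev j ≤ Fin.rev i := Fin.rev_le_rev.mpr hij
      have h2 := Tuple.monotone_sort a h1
      simpa [hν, hπ, Function.comp] using h2
    have hq1 : ∑ j, (a j - |μ j|) ^ 2 ≤ ∑ j, (α j - μ j) ^ 2 := by
      refine Finset.sum_le_sum fun j _ => ?_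
      have h1 : α j * μ j ≤ |α j| * |μ j| := by
        calc α j * μ j ≤ |α j * μ j| := le_abs_self _
          _ = |α j| * |μ j| := abs_mul _ _
      simp only [ha]
      nlinarith [sq_abs (α j), sq_abs (μ j)]
    have hmono : Monovary (fun j : Fin p => |μ j|) ν := by
      intro i j hlt
      have hji : j ≤ i := by
        by_contra hc
        push_neg at hc
        exact absurd (hνanti i j hc.le) (not_le.2 hlt)
      exact hsorted j i hji
    have hq2 : ∑ j, |μ j| * a j ≤ ∑ j, |μ j| * ν j := by
      have h := hmono.sum_mul_comp_perm_le_sum_mul (σ := π.symm)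
      have he : ∀ jj, ν (π.symm jj) = a jj := fun jj => by
        simp [hν, Equiv.apply_symm_apply]
      calc ∑ j, |μ j| * a j = ∑ j, |μ j| * ν (π.symm j) :=
            Finset.sum_congr rfl fun j _ => by rw [he j]
        _ ≤ ∑ j, |μ j| * ν j := h
    have hq3 : ∑ j, (ν j) ^ 2 = ∑ j, (a j) ^ 2 := by
      simp only [hν]
      exact Equiv.sum_comp π (fun j => (a j) ^ 2)
    have hq4 : ∑ j, (ν j - |μ j|) ^ 2 ≤ ∑ j, (a j - |μ j|) ^ 2 := by
      have e1 := sum_sq_sub ν (fun j => |μ j|)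
      have e2 := sum_sq_sub a (fun j => |μ j|)
      rw [e1, e2]
      linarith
    have ht1 : topSum k (fun j => huber M (α j)) = topSum k (fun j => huber M (ν j)) := by
      have h1 : (fun j => huber M (α j)) = fun j => huber M (a j) :=
        funext fun j => huber_abs_eq M (α j)
      rw [h1, ← topSum_comp_perm hkp (fun j => huber M (a j)) π]
    have ht2 : ∑ j ∈ Finset.univ.filter (fun j : Fin p => (j : ℕ) < k), huber M (ν j)
        ≤ topSum k (fun j => huber M (ν j)) := le_topSum (card_filter_lt hkp)
    have hG := hνmin ν hνanti
    have hb1 : ∑ j, (β j - μ j) ^ 2 ≤ ∑ j, (νstar j - |μ j|) ^ 2 := by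
      refine Finset.sum_le_sum fun j _ => ?_
      rcases lt_trichotomy (μ j) 0 with h | h | h
      · refine le_of_eq ?_
        simp only [hβ]
        rw [Real.sign_of_neg h, abs_of_neg h]
        ring
      · simp only [hβ, h, Real.sign_zero, zero_mul, abs_zero, sub_zero]
        nlinarith [sq_nonneg (νstar j)]
      · refine le_of_eq ?_
        simp only [hβ]
        rw [Real.sign_of_pos h, abs_of_pos h]
        ring
    have hb2 : topSum k (fun j => huber M (β j))
        ≤ ∑ j ∈ Finset.univ.filter (fun j : Fin p => (j : ℕ) < k), huber M (νstar j) := by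
      have hmono2 : ∀ j, huber M (β j) ≤ huber M (νstar j) := by
        intro j
        rw [huber_abs_eq]
        have habs : |β j| ≤ νstar j := by
          simp only [hβ]
          calc |Real.sign (μ j) * νstar j| = |Real.sign (μ j)| * |νstar j| := abs_mul _ _
            _ = |Real.sign (μ j)| * νstar j := by rw [abs_of_nonneg (hν0 j)]
            _ ≤ 1 * νstar j := mul_le_mul_of_nonneg_right (hsign_abs j) (hν0 j)
            _ = νstar j := one_mul _
        exact huber_mono hM.le (abs_nonneg _) habs
      calc topSum k (fun j => huber M (β j))
          ≤ topSum k (fun j => huber M (νstar j)) := topSum_mono hkp hmono2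
        _ = ∑ j ∈ Finset.univ.filter (fun j : Fin p => (j : ℕ) < k), huber M (νstar j) :=
            topSum_of_antitone hkp fun i j hij => huber_mono hM.le (hν0 j) (hνchain i j hij)
    have hρ1 := mul_le_mul_of_nonneg_left ht2 hρ.le
    have hρ2 := mul_le_mul_of_nonneg_left hb2 hρ.le
    rw [ht1]
    linarith
  -- Step 3: strict convexity forces `αstar = β`.
  have h1 := key αstar
  have h2 := hαmin β
  by_contra hne
  obtain ⟨j0, hj0⟩ : ∃ j, αstar j ≠ β j := by
    by_contra hc
    push_neg at hc
    exact hne (funext hc)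
  set m : Fin p → ℝ := fun j => (αstar j + β j) / 2 with hm
  have hmid := hαmin m
  have hquad : ∑ j, (m j - μ j) ^ 2
      < (∑ j, (αstar j - μ j) ^ 2 + ∑ j, (β j - μ j) ^ 2) / 2 := by
    have hle : ∀ j, (m j - μ j) ^ 2 ≤ ((αstar j - μ j) ^ 2 + (β j - μ j) ^ 2) / 2 := by
      intro j
      simp only [hm]
      nlinarith [sq_nonneg (αstar j - β j)]
    have hstrict : (m j0 - μ j0) ^ 2 < ((αstar j0 - μ j0) ^ 2 + (β j0 - μ j0) ^ 2) / 2 := by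
      have hpos : 0 < (αstar j0 - β j0) ^ 2 := by
        have := sub_ne_zero.2 hj0
        positivity
      simp only [hm]
      nlinarith
    calc ∑ j, (m j - μ j) ^ 2
        < ∑ j, ((αstar j - μ j) ^ 2 + (β j - μ j) ^ 2) / 2 :=
          Finset.sum_lt_sum (fun j _ => hle j) ⟨j0, Finset.mem_univ _, hstrict⟩
      _ = (∑ j, (αstar j - μ j) ^ 2 + ∑ j, (β j - μ j) ^ 2) / 2 := by
          rw [← Finset.sum_div, Finset.sum_add_distrib]
  have htop : topSum k (fun j => huber M (m j))
      ≤ (topSum k (fun j => huber M (αstar j)) + topSum k (fun j => huber M (β j))) / 2 := by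
    have hpt : ∀ j, huber M (m j) ≤ (huber M (αstar j) + huber M (β j)) / 2 := by
      intro j
      simp only [hm]
      exact huber_midpoint hM.le _ _
    calc topSum k (fun j => huber M (m j))
        ≤ topSum k (fun j => (huber M (αstar j) + huber M (β j)) / 2) := topSum_mono hkp hpt
      _ ≤ _ := topSum_half_le hkp _ _
  have hmul := mul_le_mul_of_nonneg_left htop hρ.le
  linarith
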